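/- arXiv:2109.12795 — 2 statements merged into one kernel-verified Lean document; each statement's English description precedes it below -/
import Mathlib

section
/- For $Y \in (1,2)$, $\gamma_3 \geq -Y/2$, and any $x \geq 0$ with $e^x + e^{-x} - 2 > 0$, the inequality $\gamma_3(e^x + e^{-x} - 2) + \frac{Y}{2}(e^x - 1) + 1 \geq 0$ holds. -/
theorem stmt_1 (Y γ₃ x : ℝ) (hY : 1 < Y ∧ Y < 2) (hγ₃ : -Y / 2 ≤ γ₃)
    (hx : 0 ≤ x) (hden : 0 < Real.exp x + Real.exp (-x) - 2) :
    0 ≤ γ₃ * (Real.exp x + Real.exp (-x) - 2) + Y / 2 * (Real.exp x - 1) + 1 := by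
  have h1 : Real.exp (-x) ≤ 1 := Real.exp_le_one_iff.mpr (by linarith)
  have h2 : 0 < Real.exp (-x) := Real.exp_pos _
  nlinarith [mul_le_mul_of_nonneg_right hγ₃ hden.le, hY.1]
end

section
/- For $Y \in (1,2)$, the function $f(x) = \dfrac{\frac{Y}{2}(1 - e^{x}) - 1}{e^{x} + e^{-x} - 2}$, defined for $x > 0$, is monotone increasing on $(0, \infty)$. -/
lemma key_rewrite (Y x : ℝ) (hx : 0 < x) :
    (Y / 2 * (1 - Real.exp x) - 1) / (Real.exp x + Real.exp (-x) - 2)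
      = -(Y/2) - (Y/2 + 1) * (1/(Real.exp x - 1)) - (1/(Real.exp x - 1))^2 := by
  have ht : 1 < Real.exp x := Real.one_lt_exp_iff.mpr hx
  have h0 : Real.exp x ≠ 0 := (Real.exp_pos x).ne'
  have h1 : Real.exp x - 1 ≠ 0 := by linarith
  rw [Real.exp_neg]
  rw [show Real.exp x + (Real.exp x)⁻¹ - 2 = (Real.exp x - 1)^2 / Real.exp x by
    field_simp; ring]
  field_simp
  ring

theorem stmt_2 (Y : ℝ) (hY : 1 < Y ∧ Y < 2) :
    StrictMonoOn (fun x : ℝ =>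
        (Y / 2 * (1 - Real.exp x) - 1) / (Real.exp x + Real.exp (-x) - 2))
      (Set.Ioi (0 : ℝ)) := by
  intro a ha b hb hab
  simp only [Set.mem_Ioi] at ha hb
  simp only
  rw [key_rewrite Y a ha, key_rewrite Y b hb]
  have hta : 1 < Real.exp a := Real.one_lt_exp_iff.mpr ha
  have htb : 1 < Real.exp b := Real.one_lt_exp_iff.mpr hb
  have hlt : Real.exp a < Real.exp b := Real.exp_lt_exp.2 hab
  have hu : 1/(Real.exp b - 1) < 1/(Real.exp a - 1) :=
    one_div_lt_one_div_of_lt (by linarith) (by linarith)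
  have hv : 0 < 1/(Real.exp b - 1) := by apply one_div_pos.mpr; linarith
  nlinarith [hY.1, sq_nonneg (1/(Real.exp a - 1) - 1/(Real.exp b - 1))]
end
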